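/- arXiv:1804.00936 — 2 statements merged into one kernel-verified Lean document; each statement's English description precedes it below -/
import Mathlib

section
/- For each κ > 0 and all t ≥ 0, one has (1/2) f_κ(t) ≤ t · f_κ'(t) ≤ f_κ(t), where f_κ'(t) = (1 + 2κ f_κ(t)²)^{-1/2}. -/
open Real Filter Set

/-- `Fk κ t = ∫₀ᵗ √(1 + 2κ s²) ds`. -/
noncomputable def Fk (κ t : ℝ) : ℝ := ∫ s in (0:ℝ)..t, Real.sqrt (1 + 2*κ*s^2)

/-- `f` is the inverse of `Fk κ` on `[0,∞)`. -/
def IsInvF (κ : ℝ) (f : ℝ → ℝ) : Prop :=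
  (∀ s, 0 ≤ s → f (Fk κ s) = s) ∧ ∀ t, 0 ≤ t → 0 ≤ f t ∧ Fk κ (f t) = t

/-- The derivative formula `f_κ'(t) = (1 + 2κ f_κ(t)²)^{-1/2}`. -/
noncomputable def fd (κ : ℝ) (f : ℝ → ℝ) (t : ℝ) : ℝ :=
  1 / Real.sqrt (1 + 2*κ*(f t)^2)

/-! With `x = f_κ(t)` we have `t = F_κ(x)` and `t f_κ'(t) = F_κ(x) / √(1 + 2κx²)`, so the claim
is `x √(1 + 2κx²) / 2 ≤ F_κ(x) ≤ x √(1 + 2κx²)`. The upper bound holds because the integrand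
increases on `[0, x]`; the lower bound because `x √(1 + 2κx²)` is the integral of
`(1 + 4κu²) / √(1 + 2κu²)`, which is at most twice the integrand. -/

section

variable {κ : ℝ}

lemma one_add_two_mul_sq_pos (hκ : 0 ≤ κ) (u : ℝ) : 0 < 1 + 2*κ*u^2 := by positivity

lemma sqrt_one_add_two_mul_sq_pos (hκ : 0 ≤ κ) (u : ℝ) : 0 < √(1 + 2*κ*u^2) :=
  Real.sqrt_pos.mpr (one_add_two_mul_sq_pos hκ u)

lemma hasDerivAt_mul_sqrt_one_add_two_mul_sq (hκ : 0 ≤ κ) (u : ℝ) :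
    HasDerivAt (fun u => u * √(1 + 2*κ*u^2)) ((1 + 4*κ*u^2) / √(1 + 2*κ*u^2)) u := by
  have hquad : HasDerivAt (fun u : ℝ => 1 + 2*κ*u^2) (4*κ*u) u :=
    (((hasDerivAt_pow 2 u).const_mul (2*κ)).const_add 1).congr_deriv (by push_cast; ring)
  have hprod := (hasDerivAt_id' u).mul (hquad.sqrt (one_add_two_mul_sq_pos hκ u).ne')
  refine hprod.congr_deriv ?_
  have hsq := Real.sq_sqrt (one_add_two_mul_sq_pos hκ u).le
  field_simp [(sqrt_one_add_two_mul_sq_pos hκ u).ne']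
  linear_combination 2 * hsq

lemma Fk_le_mul_sqrt (hκ : 0 ≤ κ) {x : ℝ} (hx : 0 ≤ x) : Fk κ x ≤ x * √(1 + 2*κ*x^2) := by
  have hmono : ∀ u ∈ Icc 0 x, √(1 + 2*κ*u^2) ≤ √(1 + 2*κ*x^2) := fun u hu =>
    Real.sqrt_le_sqrt (by gcongr; exact hu.1; exact hu.2)
  simpa [Fk, mul_comm] using intervalIntegral.integral_mono_on (μ := MeasureTheory.volume) hx
    ((by fun_prop : Continuous fun u : ℝ => √(1 + 2*κ*u^2)).intervalIntegrable 0 x)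
    (continuous_const.intervalIntegrable 0 x) hmono

lemma mul_sqrt_le_two_mul_Fk (hκ : 0 ≤ κ) {x : ℝ} (hx : 0 ≤ x) :
    x * √(1 + 2*κ*x^2) ≤ 2 * Fk κ x := by
  have hcont : Continuous fun u : ℝ => (1 + 4*κ*u^2) / √(1 + 2*κ*u^2) :=
    (by fun_prop : Continuous _).div (by fun_prop) fun u => (sqrt_one_add_two_mul_sq_pos hκ u).ne'
  have hFTC : ∫ u in (0:ℝ)..x, (1 + 4*κ*u^2) / √(1 + 2*κ*u^2) = x * √(1 + 2*κ*x^2) := by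
    simpa using intervalIntegral.integral_eq_sub_of_hasDerivAt
      (fun u _ => hasDerivAt_mul_sqrt_one_add_two_mul_sq hκ u) (hcont.intervalIntegrable 0 x)
  have hpointwise : ∀ u ∈ Icc 0 x,
      (1 + 4*κ*u^2) / √(1 + 2*κ*u^2) ≤ 2 * √(1 + 2*κ*u^2) := fun u _ => by
    rw [div_le_iff₀ (sqrt_one_add_two_mul_sq_pos hκ u)]
    linarith [Real.mul_self_sqrt (one_add_two_mul_sq_pos hκ u).le]
  have := intervalIntegral.integral_mono_on (μ := MeasureTheory.volume) hx
    (hcont.intervalIntegrable 0 x)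
    (((by fun_prop : Continuous fun u : ℝ => √(1 + 2*κ*u^2)).const_mul 2).intervalIntegrable 0 x)
    hpointwise
  rwa [hFTC, intervalIntegral.integral_const_mul, ← Fk] at this

end

theorem stmt_5 (κ : ℝ) (hκ : 0 < κ) (f : ℝ → ℝ) (hf : IsInvF κ f) :
    ∀ t, 0 ≤ t → (1/2) * f t ≤ t * fd κ f t ∧ t * fd κ f t ≤ f t := by
  intro t ht
  obtain ⟨hx, hFx⟩ := hf.2 t ht
  have hsqrt := sqrt_one_add_two_mul_sq_pos hκ.le (f t)
  have hlower := mul_sqrt_le_two_mul_Fk hκ.le hx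
  have hupper := Fk_le_mul_sqrt hκ.le hx
  rw [hFx] at hlower hupper
  rw [fd, mul_one_div, le_div_iff₀ hsqrt, div_le_iff₀ hsqrt]
  constructor <;> linarith
end

section
/- For each κ > 0, the map t ↦ f_κ(t) f_κ'(t)/t is strictly decreasing on (0,∞), where f_κ'(t) = (1 + 2κ f_κ(t)²)^{-1/2}. -/
/-!
Substituting `s = f t`, so that `t = Fk κ s`, the quantity becomes
`(Fk κ s / s * √(1 + 2κs²))⁻¹`. Here `Fk κ s / s` is the mean over `[0, s]` of the strictly
increasing integrand, hence strictly increasing in `s`, and so is `√(1 + 2κs²)`; since `f` is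
strictly increasing, the quantity is strictly decreasing in `t`.
-/

open Real Filter Set

theorem StrictMonoOn.mul_of_nonneg {α M₀ : Type*} [Preorder α] [MulZeroClass M₀] [Preorder M₀]
    [PosMulStrictMono M₀] [MulPosMono M₀] {s : Set α} {f g : α → M₀}
    (hf : StrictMonoOn f s) (hg : StrictMonoOn g s) (hf₀ : ∀ x ∈ s, 0 ≤ f x)
    (hg₀ : ∀ x ∈ s, 0 ≤ g x) : StrictMonoOn (fun x => f x * g x) s :=
  fun _ ha _ hb hab => mul_lt_mul'' (hf ha hb hab) (hg ha hb hab) (hf₀ _ ha) (hg₀ _ ha)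

theorem strictMonoOn_integral_div_self {g : ℝ → ℝ} (hg : Continuous g)
    (hmono : StrictMonoOn g (Ici 0)) :
    StrictMonoOn (fun s => (∫ x in (0 : ℝ)..s, g x) / s) (Ioi 0) := by
  intro a (ha : 0 < a) b (hb : 0 < b) hab
  have hbelow : (∫ x in (0 : ℝ)..a, g x) < a * g a := by
    have := intervalIntegral.integral_lt_integral_of_continuousOn_of_le_of_exists_lt ha
      hg.continuousOn continuousOn_const (fun x hx => hmono.monotoneOn hx.1.le ha.le hx.2)
      ⟨0, left_mem_Icc.2 ha.le, hmono self_mem_Ici ha.le ha⟩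
    simpa using this
  have habove : (b - a) * g a ≤ ∫ x in a..b, g x := by
    have := intervalIntegral.integral_mono_on hab.le intervalIntegrable_const
      (hg.intervalIntegrable (μ := MeasureTheory.volume) a b)
      (fun x hx => hmono.monotoneOn ha.le (ha.le.trans hx.1) hx.1)
    simpa [mul_comm] using this
  have hsplit := intervalIntegral.integral_add_adjacent_intervals
    (hg.intervalIntegrable (μ := MeasureTheory.volume) 0 a) (hg.intervalIntegrable a b)
  show _ / a < _ / b
  rw [div_lt_div_iff₀ ha hb, ← hsplit]
  nlinarith [mul_lt_mul_of_pos_left hbelow (sub_pos.2 hab), mul_le_mul_of_nonneg_left habove ha.le]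

section

variable {κ : ℝ}

theorem strictMonoOn_sqrt_one_add_mul_sq (hκ : 0 < κ) :
    StrictMonoOn (fun s : ℝ => √(1 + 2 * κ * s ^ 2)) (Ici 0) := by
  intro a (ha : 0 ≤ a) b _ hab
  show √_ < √_
  gcongr

theorem Fk_zero : Fk κ 0 = 0 :=
  intervalIntegral.integral_same

theorem Fk_strictMono (hκ : 0 ≤ κ) : StrictMono (Fk κ) := by
  intro a b hab
  have hsub : Fk κ b - Fk κ a = ∫ s in a..b, √(1 + 2 * κ * s ^ 2) :=
    intervalIntegral.integral_interval_sub_left (Continuous.intervalIntegrable (by fun_prop) _ _)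
      (Continuous.intervalIntegrable (by fun_prop) _ _)
  have hpos : 0 < ∫ s in a..b, √(1 + 2 * κ * s ^ 2) :=
    intervalIntegral.intervalIntegral_pos_of_pos_on
      (Continuous.intervalIntegrable (by fun_prop) _ _) (fun x _ => by positivity) hab
  linarith

theorem Fk_pos (hκ : 0 ≤ κ) {s : ℝ} (hs : 0 < s) : 0 < Fk κ s :=
  Fk_zero (κ := κ) ▸ Fk_strictMono hκ hs

theorem Fk_div_self_strictMonoOn (hκ : 0 < κ) : StrictMonoOn (fun s => Fk κ s / s) (Ioi 0) :=
  strictMonoOn_integral_div_self (by fun_prop) (strictMonoOn_sqrt_one_add_mul_sq hκ)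

namespace IsInvF

variable {f : ℝ → ℝ}

theorem strictMonoOn (hf : IsInvF κ f) (hκ : 0 ≤ κ) : StrictMonoOn f (Ici 0) :=
  fun t₁ ht₁ t₂ ht₂ h => (Fk_strictMono hκ).lt_iff_lt.1 <| by rwa [(hf.2 t₁ ht₁).2, (hf.2 t₂ ht₂).2]

theorem pos (hf : IsInvF κ f) (hκ : 0 ≤ κ) {t : ℝ} (ht : 0 < t) : 0 < f t :=
  (Fk_strictMono hκ).lt_iff_lt.1 <| by rwa [(hf.2 t ht.le).2, Fk_zero]

end IsInvF

end

theorem stmt_8 (κ : ℝ) (hκ : 0 < κ) (f : ℝ → ℝ) (hf : IsInvF κ f) :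
    StrictAntiOn (fun t => f t * fd κ f t / t) (Set.Ioi 0) := by
  have hprod : StrictMonoOn (fun s => Fk κ s / s * √(1 + 2 * κ * s ^ 2)) (Ioi 0) :=
    (Fk_div_self_strictMonoOn hκ).mul_of_nonneg
      ((strictMonoOn_sqrt_one_add_mul_sq hκ).mono Ioi_subset_Ici_self)
      (fun s hs => (div_pos (Fk_pos hκ.le hs) hs).le) (fun s _ => sqrt_nonneg _)
  have hprod_mapsTo : MapsTo (fun s => Fk κ s / s * √(1 + 2 * κ * s ^ 2)) (Ioi 0) (Ioi 0) :=
    fun s (hs : 0 < s) => mul_pos (div_pos (Fk_pos hκ.le hs) hs) (by positivity)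
  refine ((strictAntiOn_inv_pos.comp_strictMonoOn hprod hprod_mapsTo).comp_strictMonoOn
    ((hf.strictMonoOn hκ.le).mono Ioi_subset_Ici_self) fun t ht => hf.pos hκ.le ht).congr ?_
  intro t (ht : 0 < t)
  simp only [Function.comp, fd]
  rw [(hf.2 t ht.le).2]
  simp only [div_eq_mul_inv, mul_inv, inv_inv, one_mul]
  ring
end
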